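/- arXiv:1911.10234 — 6 statements merged into one kernel-verified Lean document; each statement's English description precedes it below -/
import Mathlib

section
/- Let T be a finite tree and P an automorphism of T. If u and v are adjacent vertices of T, and p and q denote the cardinalities of the orbits of u and of v under the cyclic group generated by P, then p divides q or q divides p. -/
/-!
If the orbits of `u` and `v` under `⟨P⟩` meet, they coincide and `p = q`. Otherwise the edges
`{Pⁿ u, Pⁿ v}` for `n < lcm p q` are pairwise distinct and form a forest on the `p + q` vertices
of the two orbits, so `lcm p q < p + q`. Writing `p = g a`, `q = g b` with `g = gcd p q`, this
reads `a b < a + b`, which forces `a = 1` or `b = 1`.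
-/

open MulAction Subgroup

theorem Nat.dvd_or_dvd_of_lcm_lt_add {a b : ℕ} (h : Nat.lcm a b < a + b) :
    a ∣ b ∨ b ∣ a := by
  rcases Nat.eq_zero_or_pos a with rfl | ha
  · exact Or.inr (dvd_zero b)
  rcases Nat.eq_zero_or_pos b with rfl | hb
  · exact Or.inl (dvd_zero a)
  obtain ⟨a', ha'⟩ := Nat.gcd_dvd_left a b
  obtain ⟨b', hb'⟩ := Nat.gcd_dvd_right a b
  set g := Nat.gcd a b
  have hg : 0 < g := Nat.gcd_pos_of_pos_left b ha
  have hlcm : g * Nat.lcm a b = g * (g * (a' * b')) := by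
    rw [Nat.gcd_mul_lcm, ha', hb']; ring
  have hlt : a' * b' < a' + b' := by
    rw [Nat.eq_of_mul_eq_mul_left hg hlcm, ha', hb', ← mul_add] at h
    exact Nat.lt_of_mul_lt_mul_left h
  by_cases ha1 : a' = 1
  · exact Or.inl (by rw [ha', ha1, mul_one]; exact Nat.gcd_dvd_right a b)
  by_cases hb1 : b' = 1
  · exact Or.inr (by rw [hb', hb1, mul_one]; exact Nat.gcd_dvd_left a b)
  have ha2 : 2 ≤ a' := by rcases a' with _ | _ | _ <;> simp_all
  have hb2 : 2 ≤ b' := by rcases b' with _ | _ | _ <;> simp_all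
  nlinarith

namespace SimpleGraph

variable {V : Type*} {G : SimpleGraph V}

theorem IsAcyclic.card_edgeSet_lt [Finite V] [Nonempty V] (hG : G.IsAcyclic) :
    Nat.card G.edgeSet < Nat.card V := by
  obtain ⟨T, hGT, -, hT⟩ := connected_top.exists_isTree_le_of_le_of_isAcyclic le_top hG
  have hT_card := (isTree_iff_connected_and_card.mp hT).2
  have := Nat.card_mono (Set.toFinite T.edgeSet) (edgeSet_mono hGT)
  omega

theorem Subgraph.finite_edgeSet (H : G.Subgraph) (hfin : H.verts.Finite) : H.edgeSet.Finite := by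
  have : Finite H.verts := hfin
  exact H.image_coe_edgeSet_coe ▸ (Set.toFinite _).image _

theorem IsAcyclic.ncard_edgeSet_lt_ncard_verts (hG : G.IsAcyclic) (H : G.Subgraph)
    (hfin : H.verts.Finite) (hne : H.verts.Nonempty) : H.edgeSet.ncard < H.verts.ncard := by
  have : Finite H.verts := hfin
  have : Nonempty H.verts := hne.to_subtype
  rw [← H.image_coe_edgeSet_coe,
    Set.ncard_image_of_injective _ (Sym2.map.injective Subtype.val_injective),
    ← Nat.card_coe_set_eq, ← Nat.card_coe_set_eq]
  exact (hG.comap H.hom H.hom_injective).card_edgeSet_lt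

end SimpleGraph

namespace MulAction

variable {Γ α : Type*} [Group Γ] [MulAction Γ α]

theorem pow_smul_eq_pow_smul_iff_modEq {g : Γ} {a : α} {i j : ℕ} :
    g ^ i • a = g ^ j • a ↔ i ≡ j [MOD period g a] := by
  rw [Nat.modEq_iff_dvd, ← zpow_smul_eq_iff_period_dvd, sub_eq_neg_add, zpow_add, mul_smul,
    zpow_neg, inv_smul_eq_iff, zpow_natCast, zpow_natCast, eq_comm]

theorem period_eq_ncard_orbit_zpowers (g : Γ) (a : α) :
    period g a = (orbit (zpowers g) a).ncard := by
  rw [← Nat.card_coe_set_eq, Nat.card_congr (orbitZPowersEquiv g a), Nat.card_zmod,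
    period_eq_minimalPeriod]

theorem ncard_range_zpow_smul (g : Γ) (a : α) :
    (Set.range fun k : ℤ => g ^ k • a).ncard = period g a := by
  rw [period_eq_ncard_orbit_zpowers]
  congr 1
  ext x
  constructor
  · rintro ⟨k, rfl⟩
    exact ⟨⟨g ^ k, zpow_mem_zpowers g k⟩, rfl⟩
  · rintro ⟨⟨_, k, rfl⟩, rfl⟩
    exact ⟨k, rfl⟩

theorem pow_smul_mem_orbit_zpowers (g : Γ) (a : α) (n : ℕ) :
    g ^ n • a ∈ orbit (zpowers g) a :=
  mem_orbit a (⟨g ^ n, npow_mem_zpowers g n⟩ : zpowers g)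

theorem period_pow_smul (g : Γ) (a : α) (n : ℕ) : period g (g ^ n • a) = period g a := by
  rw [period_eq_ncard_orbit_zpowers, period_eq_ncard_orbit_zpowers,
    orbit_eq_iff.mpr (pow_smul_mem_orbit_zpowers g a n)]

end MulAction

namespace SimpleGraph

variable {Γ V : Type*} [Group Γ] [MulAction Γ V] {G : SimpleGraph V} {g : Γ}

theorem adj_pow_smul (hg : ∀ x y, G.Adj x y → G.Adj (g • x) (g • y)) {u v : V}
    (huv : G.Adj u v) (n : ℕ) : G.Adj (g ^ n • u) (g ^ n • v) := by
  induction n with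
  | zero => simpa using huv
  | succ n ih =>
    rw [pow_succ', mul_smul, mul_smul]
    exact hg _ _ ih

theorem IsAcyclic.period_dvd_or_dvd (hG : G.IsAcyclic)
    (hg : ∀ x y, G.Adj x y → G.Adj (g • x) (g • y)) {u v : V} (huv : G.Adj u v) :
    period g u ∣ period g v ∨ period g v ∣ period g u := by
  rcases Nat.eq_zero_or_pos (period g u) with hp | hp
  · exact Or.inr (hp ▸ dvd_zero _)
  rcases Nat.eq_zero_or_pos (period g v) with hq | hq
  · exact Or.inl (hq ▸ dvd_zero _)
  by_cases hmeet : ∃ i j : ℕ, g ^ i • u = g ^ j • v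
  · obtain ⟨i, j, h⟩ := hmeet
    left
    rw [← period_pow_smul g u i, h, period_pow_smul]
  push Not at hmeet
  set L := Nat.lcm (period g u) (period g v)
  set O := orbit (zpowers g) u ∪ orbit (zpowers g) v
  let H : G.Subgraph := (⊤ : G.Subgraph).induce O
  have hO : O.Finite := (Set.finite_of_ncard_pos (period_eq_ncard_orbit_zpowers g u ▸ hp)).union
    (Set.finite_of_ncard_pos (period_eq_ncard_orbit_zpowers g v ▸ hq))
  have hedge : ∀ n ∈ (Finset.range L : Set ℕ), s(g ^ n • u, g ^ n • v) ∈ H.edgeSet :=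
    fun n _ ↦ ⟨Or.inl (pow_smul_mem_orbit_zpowers g u n),
      Or.inr (pow_smul_mem_orbit_zpowers g v n), adj_pow_smul hg huv n⟩
  -- the orbits are disjoint, so two of these edges can only agree endpoint by endpoint
  have hinj : Set.InjOn (fun n ↦ s(g ^ n • u, g ^ n • v)) (Finset.range L) := by
    intro m hm n hn hmn
    rcases Sym2.eq_iff.mp hmn with ⟨hu, hv⟩ | ⟨h, -⟩
    · exact Nat.ModEq.eq_of_lt_of_lt
        (Nat.mod_lcm (pow_smul_eq_pow_smul_iff_modEq.mp hu) (pow_smul_eq_pow_smul_iff_modEq.mp hv))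
        (Finset.mem_range.mp hm) (Finset.mem_range.mp hn)
    · exact absurd h (hmeet m n)
  apply Nat.dvd_or_dvd_of_lcm_lt_add
  calc L = (Finset.range L : Set ℕ).ncard := by simp
    _ ≤ H.edgeSet.ncard := Set.ncard_le_ncard_of_injOn _ hedge hinj (H.finite_edgeSet hO)
    _ < O.ncard := hG.ncard_edgeSet_lt_ncard_verts H hO ⟨u, Or.inl (mem_orbit_self u)⟩
    _ ≤ _ := by
      rw [period_eq_ncard_orbit_zpowers, period_eq_ncard_orbit_zpowers]
      exact Set.ncard_union_le _ _

end SimpleGraph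

theorem stmt_0_general {V : Type*} (G : SimpleGraph V) (hG : G.IsTree)
    (P : Equiv.Perm V) (hP : ∀ x y : V, G.Adj x y ↔ G.Adj (P x) (P y))
    (u v : V) (huv : G.Adj u v)
    (p q : ℕ)
    (hp : p = (Set.range fun k : ℤ => (P ^ k) u).ncard)
    (hq : q = (Set.range fun k : ℤ => (P ^ k) v).ncard) :
    p ∣ q ∨ q ∣ p := by
  rw [hp.trans (ncard_range_zpow_smul P u), hq.trans (ncard_range_zpow_smul P v)]
  exact hG.isAcyclic.period_dvd_or_dvd (fun x y ↦ (hP x y).mp) huv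

/-- Let `T` be a finite tree and `P` an automorphism of `T`. If `u` and `v`
are adjacent vertices of `T`, and `p` and `q` denote the cardinalities of the orbits of `u`
and of `v` under the cyclic group generated by `P`, then `p ∣ q` or `q ∣ p`. -/
theorem stmt_0 {V : Type*} [Fintype V] (G : SimpleGraph V) (hG : G.IsTree)
    (P : Equiv.Perm V) (hP : ∀ x y : V, G.Adj x y ↔ G.Adj (P x) (P y))
    (u v : V) (huv : G.Adj u v)
    (p q : ℕ)
    (hp : p = (Set.range fun k : ℤ => (P ^ k) u).ncard)
    (hq : q = (Set.range fun k : ℤ => (P ^ k) v).ncard) :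
    p ∣ q ∨ q ∣ p :=
  stmt_0_general G hG P hP u v huv p q hp hq
end

section
/- Let T be a finite tree, P an automorphism of T, and u, v adjacent vertices of T whose orbits O₁ (of cardinality p) and O₂ (of cardinality q) under P are disjoint, with p dividing q. Then for every integer j, the set of neighbours of P^j(u) that belong to O₂ is exactly {P^{j+kp}(v) : 0 ≤ k < q/p}; in particular, every vertex of O₁ has exactly q/p neighbours in O₂. -/
/-!
Let `p` and `q` be the minimal periods of `u` and `v` under `P`. The neighbours of `u` in the orbit
of `v` are exactly the `P^s v` with `p ∣ s`. Indeed, suppose `u ~ P^s v` but `P^s u ≠ u`, and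
delete the edge `uv`, a bridge of the tree. The walk `u, P^s v, P^s u, P^{2s} v, P^{2s} u, …`
then avoids `uv` until it first returns to `v` (since `p ∣ q`, a power of `P` fixing `v` also
fixes `u`), and it does return, as `P` has finite order: so `u` and `v` stay connected, a
contradiction. Transporting by `P^j`, and reducing exponents modulo `q`, the neighbours of `P^j u`
in the orbit of `v` are the `q / p` distinct vertices `P^{j + m p} v`, `0 ≤ m < q / p`.
-/

open Function

namespace Equiv.Perm

variable {V : Type*} (P : Perm V) (x : V)

theorem zpow_apply_eq_self_iff (k : ℤ) : (P ^ k) x = x ↔ (minimalPeriod P x : ℤ) ∣ k :=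
  MulAction.zpow_smul_eq_iff_minimalPeriod_dvd (a := P)

theorem zpow_apply_eq_zpow_apply_iff (a b : ℤ) :
    (P ^ a) x = (P ^ b) x ↔ (minimalPeriod P x : ℤ) ∣ a - b := by
  conv_lhs => rw [← add_sub_cancel b a, zpow_add, Perm.mul_apply]
  rw [(P ^ b).injective.eq_iff, zpow_apply_eq_self_iff]

theorem ncard_range_zpow_apply :
    (Set.range fun k : ℤ => (P ^ k) x).ncard = minimalPeriod P x := by
  have : Set.range (fun k : ℤ => (P ^ k) x) = MulAction.orbit (Subgroup.zpowers P) x := by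
    ext w
    simp [MulAction.mem_orbit_iff, Subgroup.exists_zpowers, Subgroup.smul_def]
  rw [this, ← Nat.card_coe_set_eq, Nat.card_congr (MulAction.orbitZPowersEquiv P x),
    Nat.card_zmod]
  rfl

theorem minimalPeriod_pos [Finite V] : 0 < minimalPeriod P x :=
  NeZero.pos (minimalPeriod (P • ·) x)

theorem exists_lt_div_and_zpow_apply_eq_iff_dvd_sub [Finite V] {p : ℕ}
    (hp : p ∣ minimalPeriod P x) (j s : ℤ) :
    (∃ m : ℕ, m < minimalPeriod P x / p ∧ (P ^ s) x = (P ^ (j + m * p)) x) ↔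
      (p : ℤ) ∣ s - j := by
  obtain ⟨r, hr⟩ := hp
  have hpr := hr ▸ minimalPeriod_pos P x
  simp_rw [zpow_apply_eq_zpow_apply_iff, hr,
    Nat.mul_div_cancel_left r (Nat.pos_of_mul_pos_right hpr)]
  push_cast
  constructor
  · rintro ⟨m, -, h⟩
    have hsj : s - j = (s - (j + m * p)) + m * p := by ring
    rw [hsj]
    exact dvd_add ((dvd_mul_right _ _).trans h) (dvd_mul_left _ _)
  · rintro ⟨c, hc⟩
    have hr0 : (0 : ℤ) < r := by exact_mod_cast Nat.pos_of_mul_pos_left hpr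
    have hc0 := Int.emod_nonneg c hr0.ne'
    refine ⟨(c % r).toNat, by have := Int.emod_lt_of_pos c hr0; omega, c / r, ?_⟩
    rw [Int.toNat_of_nonneg hc0, Int.emod_def]
    linear_combination hc

theorem ncard_setOf_exists_lt_div_eq_zpow_apply [Finite V] {p : ℕ}
    (hp : p ∣ minimalPeriod P x) (j : ℤ) :
    {w | ∃ m : ℕ, m < minimalPeriod P x / p ∧ w = (P ^ (j + m * p)) x}.ncard =
      minimalPeriod P x / p := by
  obtain ⟨r, hr⟩ := hp
  have hpr := hr ▸ minimalPeriod_pos P x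
  have hp0 : (p : ℤ) ≠ 0 := by exact_mod_cast (Nat.pos_of_mul_pos_right hpr).ne'
  rw [hr, Nat.mul_div_cancel_left r (Nat.pos_of_mul_pos_right hpr)]
  have hinj : Set.InjOn (fun m : ℕ => (P ^ (j + m * p)) x) (Set.Iio r) := by
    intro m₁ hm₁ m₂ hm₂ h
    rw [Set.mem_Iio] at hm₁ hm₂
    rw [zpow_apply_eq_zpow_apply_iff, hr,
      show j + m₁ * p - (j + m₂ * p) = p * (m₁ - m₂ : ℤ) by ring] at h
    push_cast at h
    have := Int.eq_zero_of_abs_lt_dvd (Int.dvd_of_mul_dvd_mul_left hp0 h) (by rw [abs_lt]; omega)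
    omega
  have hset : {w | ∃ m : ℕ, m < r ∧ w = (P ^ (j + m * p)) x} =
      (fun m : ℕ => (P ^ (j + m * p)) x) '' Set.Iio r := by
    ext w
    simp [eq_comm]
  rw [hset, hinj.ncard_image, Set.ncard_Iio_nat]

end Equiv.Perm

namespace SimpleGraph

variable {V : Type*} {G : SimpleGraph V} {P : Equiv.Perm V}

theorem adj_zpow_apply_iff (hP : ∀ x y : V, G.Adj x y ↔ G.Adj (P x) (P y)) (k : ℤ) (x y : V) :
    G.Adj ((P ^ k) x) ((P ^ k) y) ↔ G.Adj x y := by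
  induction k using Int.induction_on generalizing x y with
  | zero => simp
  | succ n ih => rw [zpow_add_one, Equiv.Perm.mul_apply, Equiv.Perm.mul_apply, ih, ← hP]
  | pred n ih =>
    rw [zpow_sub_one, Equiv.Perm.mul_apply, Equiv.Perm.mul_apply, ih, hP]
    simp

theorem IsAcyclic.zpow_apply_eq_self_of_adj [Finite V] (hG : G.IsAcyclic)
    (hP : ∀ x y : V, G.Adj x y ↔ G.Adj (P x) (P y)) {x y : V} (hxy : G.Adj x y)
    (hyx : ∀ k : ℤ, (P ^ k) x ≠ y) (hstab : ∀ k : ℤ, (P ^ k) y = y → (P ^ k) x = x)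
    {s : ℤ} (hs : G.Adj x ((P ^ s) y)) : (P ^ s) x = x := by
  by_contra hsx
  set G' := G.deleteEdges {s(x, y)}
  have hbridge : ¬ G'.Reachable x y := isAcyclic_iff_forall_adj_isBridge.mp hG hxy
  have hedge (a b : ℤ) (h : G.Adj ((P ^ a) x) ((P ^ b) y))
      (hne : ¬ ((P ^ a) x = x ∧ (P ^ b) y = y)) : G'.Adj ((P ^ a) x) ((P ^ b) y) := by
    refine (deleteEdges_adj ..).mpr ⟨h, ?_⟩
    rw [Set.mem_singleton_iff, Sym2.eq_iff]
    rintro (h' | ⟨h', -⟩)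
    · exact hne h'
    · exact hyx a h'
  have hstep (N : ℤ) (hN : G'.Reachable x ((P ^ N) y)) : G'.Reachable x ((P ^ (N + s)) y) := by
    have hback : G'.Adj ((P ^ N) x) ((P ^ N) y) :=
      hedge N N ((adj_zpow_apply_iff hP N x y).2 hxy) fun h => hbridge (h.2 ▸ hN)
    have hforth : G'.Adj ((P ^ N) x) ((P ^ (N + s)) y) := by
      refine hedge N (N + s) ?_ fun ⟨hNx, hNsy⟩ => hsx ?_
      · rwa [zpow_add, Equiv.Perm.mul_apply, adj_zpow_apply_iff hP]
      · have hNsx := hstab _ hNsy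
        rwa [add_comm, zpow_add, Equiv.Perm.mul_apply, hNx] at hNsx
    exact hN.trans (hback.symm.reachable.trans hforth.reachable)
  have hreach (n : ℕ) (hn : 1 ≤ n) : G'.Reachable x ((P ^ (n * s)) y) := by
    induction n, hn using Nat.le_induction with
    | base =>
      simpa using (hedge 0 s (by simpa using hs) fun h => hsx (hstab s h.2)).reachable
    | succ n _ ih => simpa [add_mul] using hstep _ ih
  apply hbridge
  simpa [zpow_mul] using hreach (orderOf P) (orderOf_pos P)

theorem adj_zpow_apply_iff_dvd_sub [Finite V] (hG : G.IsAcyclic)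
    (hP : ∀ x y : V, G.Adj x y ↔ G.Adj (P x) (P y)) {x y : V} (hxy : G.Adj x y)
    (hyx : ∀ k : ℤ, (P ^ k) x ≠ y) (hdvd : minimalPeriod P x ∣ minimalPeriod P y)
    (j s : ℤ) :
    G.Adj ((P ^ j) x) ((P ^ s) y) ↔ (minimalPeriod P x : ℤ) ∣ s - j := by
  have hx : (P ^ (-j)) ((P ^ j) x) = x := by simp [← Equiv.Perm.mul_apply]
  have hy : (P ^ (-j)) ((P ^ s) y) = (P ^ (s - j)) y := by
    rw [← Equiv.Perm.mul_apply, ← zpow_add, neg_add_eq_sub]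
  rw [← adj_zpow_apply_iff hP (-j), hx, hy, ← Equiv.Perm.zpow_apply_eq_self_iff]
  refine ⟨hG.zpow_apply_eq_self_of_adj hP hxy hyx fun k hk => ?_, fun h => ?_⟩
  · rw [Equiv.Perm.zpow_apply_eq_self_iff] at hk ⊢
    exact (Int.natCast_dvd_natCast.mpr hdvd).trans hk
  · rwa [← adj_zpow_apply_iff hP (s - j), h] at hxy

end SimpleGraph

open Equiv.Perm SimpleGraph

/-- Let `T` be a finite tree, `P` an automorphism of `T`, and `u, v` adjacent
vertices of `T` whose orbits `O₁` (of cardinality `p`) and `O₂` (of cardinality `q`) under `P`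
are disjoint, with `p` dividing `q`. Then for every integer `j`, the set of neighbours of
`P^j(u)` that belong to `O₂` is exactly `{P^{j+kp}(v) : 0 ≤ k < q/p}`; in particular, every
vertex of `O₁` has exactly `q/p` neighbours in `O₂`. -/
theorem stmt_1 {V : Type*} [Fintype V] (G : SimpleGraph V) (hG : G.IsTree)
    (P : Equiv.Perm V) (hP : ∀ x y : V, G.Adj x y ↔ G.Adj (P x) (P y))
    (u v : V) (huv : G.Adj u v)
    (O₁ O₂ : Set V)
    (hO₁ : O₁ = Set.range fun k : ℤ => (P ^ k) u)
    (hO₂ : O₂ = Set.range fun k : ℤ => (P ^ k) v)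
    (hdisj : Disjoint O₁ O₂)
    (p q : ℕ) (hp : p = O₁.ncard) (hq : q = O₂.ncard) (hpq : p ∣ q) :
    (∀ j : ℤ, {w : V | w ∈ O₂ ∧ G.Adj ((P ^ j) u) w} =
      {w : V | ∃ m : ℕ, m < q / p ∧ w = (P ^ (j + (m : ℤ) * (p : ℤ))) v}) ∧
    ∀ x ∈ O₁, {w : V | w ∈ O₂ ∧ G.Adj x w}.ncard = q / p := by
  rw [hO₁, ncard_range_zpow_apply] at hp
  rw [hO₂, ncard_range_zpow_apply] at hq
  subst hp hq hO₁ hO₂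
  have hvu (k : ℤ) : (P ^ k) u ≠ v := fun h => hdisj.ne_of_mem ⟨k, rfl⟩ ⟨0, by simp⟩ h
  have hadj := adj_zpow_apply_iff_dvd_sub hG.isAcyclic hP huv hvu hpq
  have hnbrs (j : ℤ) : {w | w ∈ Set.range (fun k : ℤ => (P ^ k) v) ∧ G.Adj ((P ^ j) u) w} =
      {w | ∃ m : ℕ, m < minimalPeriod P v / minimalPeriod P u ∧
        w = (P ^ (j + m * minimalPeriod P u)) v} := by
    ext w
    constructor
    · rintro ⟨⟨s, rfl⟩, hw⟩
      exact (exists_lt_div_and_zpow_apply_eq_iff_dvd_sub P v hpq j s).2 ((hadj j s).1 hw)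
    · rintro ⟨m, -, rfl⟩
      exact ⟨⟨_, rfl⟩, (hadj _ _).2 ⟨m, by ring⟩⟩
  refine ⟨hnbrs, ?_⟩
  rintro _ ⟨j, rfl⟩
  rw [hnbrs j, ncard_setOf_exists_lt_div_eq_zpow_apply P v hpq]
end

section
/- Let T be a finite tree, P an automorphism of T, and c a coloring of the edges of T invariant under P (i.e. c(P(x)P(y)) = c(xy) for every edge xy). If u, v are adjacent vertices of T whose orbits O₁ and O₂ under P are disjoint, then all edges of T having one endpoint in O₁ and the other endpoint in O₂ have the same color. -/
/-!
An edge between the two orbits is carried by a power of `P` to an edge `u — Q v` with `Q` a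
power of `P`, so it suffices to show `c s(u, Q v) = c s(u, v)`. If `Q` fixes `u` this is the
invariance of `c`, and if `Q` fixes `v` there is nothing to prove. Otherwise, with `n` the
period of `v` under `Q`, the walk `u, v = Qⁿ v, Qⁿ⁻¹ u, Qⁿ⁻¹ v, …, Q u, Q v` never uses the edge
`u — Q v`, which is impossible since every edge of a tree is a bridge. Finiteness of the tree is
what makes the period exist.
-/

open Equiv

lemma Equiv.Perm.pow_succ'_apply {α : Type*} (f : Perm α) (k : ℕ) (x : α) :
    (f ^ (k + 1)) x = f ((f ^ k) x) := by
  rw [pow_succ', Perm.mul_apply]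

lemma Equiv.Perm.pow_apply_ne_pow_apply_of_not_sameCycle {α : Type*} {f : Perm α} {x y : α}
    (h : ¬ f.SameCycle x y) (a b : ℕ) : (f ^ a) x ≠ (f ^ b) y :=
  fun hab => h (by simpa using hab.sameCycle f)

namespace SimpleGraph

variable {V C : Type*}

def autPerm (G : SimpleGraph V) : Subgroup (Perm V) where
  carrier := {Q | ∀ x y, G.Adj (Q x) (Q y) ↔ G.Adj x y}
  one_mem' _ _ := Iff.rfl
  mul_mem' hQ hR x y := (hQ _ _).trans (hR x y)
  inv_mem' {Q} hQ x y := by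
    rw [← hQ, Perm.coe_inv, apply_symm_apply, apply_symm_apply]

def colorAutPerm (G : SimpleGraph V) (c : Sym2 V → C) : Subgroup (Perm V) where
  carrier := {Q | Q ∈ G.autPerm ∧ ∀ x y, G.Adj x y → c s(Q x, Q y) = c s(x, y)}
  one_mem' := ⟨G.autPerm.one_mem, fun _ _ _ => rfl⟩
  mul_mem' hQ hR := ⟨G.autPerm.mul_mem hQ.1 hR.1, fun x y h => by
    rw [Perm.mul_apply, Perm.mul_apply, hQ.2 _ _ ((hR.1 x y).2 h), hR.2 x y h]⟩
  inv_mem' {Q} hQ := ⟨G.autPerm.inv_mem hQ.1, fun x y h => by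
    rw [← hQ.2 _ _ ((G.autPerm.inv_mem hQ.1 x y).2 h), Perm.coe_inv, apply_symm_apply,
      apply_symm_apply]⟩

variable {G : SimpleGraph V} {c : Sym2 V → C} {Q : Perm V} {u v : V}

lemma adj_pow_apply_of_mem_autPerm (hQ : Q ∈ G.autPerm) (k : ℕ) {x y : V} (h : G.Adj x y) :
    G.Adj ((Q ^ k) x) ((Q ^ k) y) :=
  (pow_mem hQ k x y).2 h

/-- The walk `Qᵏ⁺¹ v — Qᵏ⁺¹ u — Qᵏ⁺² v` could only use the edge `u — Q v` if `Qᵏ⁺¹ v = v`, or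
`Qᵏ v = v` and `Qᵏ⁺¹ u = u`; below the period of `v` this forces `k = 0` and `Q u = u`. -/
lemma reachable_deleteEdges_pow_succ (hQ : Q ∈ G.autPerm) (huv : G.Adj u v)
    (huQv : G.Adj u (Q v)) (hdisj : ¬ Q.SameCycle u v) (hu : Q u ≠ u) {k : ℕ}
    (hk : k + 1 < MulAction.period Q v) :
    (G.deleteEdges {s(u, Q v)}).Reachable ((Q ^ (k + 1)) v) ((Q ^ (k + 2)) v) := by
  have hmoved : ∀ n, 0 < n → n < MulAction.period Q v → (Q ^ n) v ≠ v :=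
    fun n hn hnp => MulAction.pow_smul_ne_of_lt_period hn hnp
  have h₁ : (G.deleteEdges {s(u, Q v)}).Adj ((Q ^ (k + 1)) v) ((Q ^ (k + 1)) u) := by
    refine (deleteEdges_adj ..).2 ⟨(adj_pow_apply_of_mem_autPerm hQ _ huv).symm, fun he => ?_⟩
    rcases Sym2.eq_iff.1 he with ⟨h, -⟩ | ⟨h, h'⟩
    · exact Perm.pow_apply_ne_pow_apply_of_not_sameCycle hdisj 0 (k + 1) (by simpa using h.symm)
    · rw [Perm.pow_succ'_apply] at h
      obtain rfl | hk0 := Nat.eq_zero_or_pos k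
      · exact hu (by simpa using h')
      · exact hmoved k hk0 (by omega) (Q.injective h)
  have h₂ : (G.deleteEdges {s(u, Q v)}).Adj ((Q ^ (k + 1)) u) ((Q ^ (k + 2)) v) := by
    refine (deleteEdges_adj ..).2 ⟨?_, fun he => ?_⟩
    · rw [pow_succ _ (k + 1), Perm.mul_apply]
      exact adj_pow_apply_of_mem_autPerm hQ (k + 1) huQv
    · rcases Sym2.eq_iff.1 he with ⟨-, h⟩ | ⟨h, -⟩
      · rw [Perm.pow_succ'_apply] at h
        exact hmoved (k + 1) k.succ_pos hk (Q.injective h)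
      · exact Perm.pow_apply_ne_pow_apply_of_not_sameCycle hdisj (k + 1) 1 (by simpa using h)
  exact h₁.reachable.trans h₂.reachable

lemma reachable_deleteEdges_apply_self [Finite V] (hQ : Q ∈ G.autPerm) (huv : G.Adj u v)
    (huQv : G.Adj u (Q v)) (hdisj : ¬ Q.SameCycle u v) (hu : Q u ≠ u) :
    (G.deleteEdges {s(u, Q v)}).Reachable (Q v) v := by
  have chain : ∀ k, k + 1 ≤ MulAction.period Q v →
      (G.deleteEdges {s(u, Q v)}).Reachable (Q v) ((Q ^ (k + 1)) v) := by
    intro k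
    induction k with
    | zero => simp
    | succ k ih =>
      exact fun hk => (ih (by omega)).trans
        (reachable_deleteEdges_pow_succ hQ huv huQv hdisj hu (by omega))
  have hpos : 0 < MulAction.period Q v := MulAction.period_pos_of_orderOf_pos (orderOf_pos Q) v
  have hper : (Q ^ MulAction.period Q v) v = v := MulAction.pow_period_smul Q v
  simpa only [Nat.sub_add_cancel hpos, hper] using chain _ (Nat.sub_add_cancel hpos).le

theorem IsAcyclic.apply_eq_self_or_apply_eq_self [Finite V] (hG : G.IsAcyclic)
    (hQ : Q ∈ G.autPerm) (huv : G.Adj u v) (huQv : G.Adj u (Q v)) (hdisj : ¬ Q.SameCycle u v) :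
    Q u = u ∨ Q v = v := by
  by_contra! ⟨hu, hv⟩
  have hbridge := isBridge_iff.1 (isAcyclic_iff_forall_adj_isBridge.1 hG huQv)
  have huvH : (G.deleteEdges {s(u, Q v)}).Adj u v :=
    (deleteEdges_adj ..).2 ⟨huv, by rw [Set.mem_singleton_iff, Sym2.congr_right]; exact hv.symm⟩
  exact hbridge (huvH.reachable.trans (reachable_deleteEdges_apply_self hQ huv huQv hdisj hu).symm)

theorem IsAcyclic.color_eq_of_adj_apply [Finite V] (hG : G.IsAcyclic)
    (hQ : Q ∈ G.colorAutPerm c) (huv : G.Adj u v) (huQv : G.Adj u (Q v))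
    (hdisj : ¬ Q.SameCycle u v) : c s(u, Q v) = c s(u, v) := by
  rcases hG.apply_eq_self_or_apply_eq_self hQ.1 huv huQv hdisj with hu | hv
  · calc c s(u, Q v) = c s(Q u, Q v) := by rw [hu]
      _ = c s(u, v) := hQ.2 u v huv
  · rw [hv]

theorem IsAcyclic.color_eq_of_sameCycle [Finite V] (hG : G.IsAcyclic) {P : Perm V}
    (hP : P ∈ G.colorAutPerm c) (huv : G.Adj u v) (hdisj : ¬ P.SameCycle u v) {x y : V}
    (hx : P.SameCycle u x) (hy : P.SameCycle v y) (hxy : G.Adj x y) : c s(x, y) = c s(u, v) := by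
  obtain ⟨a, rfl⟩ := hx
  obtain ⟨b, rfl⟩ := hy
  have hb : (P ^ b) v = (P ^ a) ((P ^ (b - a)) v) := by
    rw [← Perm.mul_apply, ← zpow_add, add_sub_cancel]
  have hPa := zpow_mem hP a
  rw [hb] at hxy ⊢
  have huQv : G.Adj u ((P ^ (b - a)) v) := (hPa.1 _ _).1 hxy
  rw [hPa.2 _ _ huQv]
  exact hG.color_eq_of_adj_apply (zpow_mem hP _) huv huQv fun h => hdisj h.of_zpow

end SimpleGraph

/-- Let `T` be a finite tree, `P` an automorphism of `T`, and `c` a coloring of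
the edges of `T` invariant under `P`. If `u, v` are adjacent vertices of `T` whose orbits `O₁`
and `O₂` under `P` are disjoint, then all edges of `T` having one endpoint in `O₁` and the other
endpoint in `O₂` have the same color. -/
theorem stmt_2 {V C : Type*} [Fintype V] (G : SimpleGraph V) (hG : G.IsTree)
    (P : Equiv.Perm V) (hP : ∀ x y : V, G.Adj x y ↔ G.Adj (P x) (P y))
    (c : Sym2 V → C)
    (hc : ∀ x y : V, G.Adj x y → c s(P x, P y) = c s(x, y))
    (u v : V) (huv : G.Adj u v)
    (O₁ O₂ : Set V)
    (hO₁ : O₁ = Set.range fun k : ℤ => (P ^ k) u)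
    (hO₂ : O₂ = Set.range fun k : ℤ => (P ^ k) v)
    (hdisj : Disjoint O₁ O₂) :
    ∀ x₁ y₁ x₂ y₂ : V, G.Adj x₁ y₁ → G.Adj x₂ y₂ →
      x₁ ∈ O₁ → y₁ ∈ O₂ → x₂ ∈ O₁ → y₂ ∈ O₂ →
      c s(x₁, y₁) = c s(x₂, y₂) := by
  subst hO₁ hO₂
  have hPc : P ∈ G.colorAutPerm c := ⟨fun x y => (hP x y).symm, hc⟩
  have hPuv : ¬ P.SameCycle u v := fun huv => Set.disjoint_left.1 hdisj huv ⟨0, rfl⟩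
  intro x₁ y₁ x₂ y₂ h₁ h₂ hx₁ hy₁ hx₂ hy₂
  rw [hG.isAcyclic.color_eq_of_sameCycle hPc huv hPuv hx₁ hy₁ h₁,
    hG.isAcyclic.color_eq_of_sameCycle hPc huv hPuv hx₂ hy₂ h₂]
end

section
/- Every automorphism of a finite tree either fixes some vertex, or there exist adjacent vertices u, v such that P(u) = v and P(v) = u (i.e. P maps some edge to itself). -/
/-!
If `P` fixes no vertex, send each vertex `v` to the first vertex `f v` on the path from `v` to
`P v`. In an acyclic graph the walk `v, f v, f (f v), …` is a path as long as it never
backtracks, so in a finite one some edge `xy` has `f x = y` and `f y = x`. Then `P x` lies on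
`y`'s side of the bridge `xy` and `P y` on `x`'s side; as `P x` and `P y` are adjacent, the
edge between them is `xy` itself, so `P` swaps `x` and `y`.
-/

namespace SimpleGraph

variable {V : Type*} {G : SimpleGraph V}

theorem IsAcyclic.eq_or_eq_of_adj_of_snd_ne (hG : G.IsAcyclic) {u w w' : V} {p : G.Walk u w}
    {q : G.Walk u w'} (hp : p.IsPath) (hq : q.IsPath) (hadj : G.Adj w w')
    (hsnd : p.snd ≠ q.snd) : w = u ∨ w' = u := by
  by_cases hw' : w' ∈ p.support
  · obtain rfl := hG.path_concat hq hp hadj.symm hw'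
    cases q with
    | nil => exact .inr rfl
    | cons _ _ => simp [Walk.concat] at hsnd
  · obtain rfl := hG.path_concat hp hq hadj
      (hG.mem_support_of_ne_mem_support_of_adj_of_isPath hq hp hadj.symm hw')
    cases p with
    | nil => exact .inl rfl
    | cons _ _ => simp [Walk.concat] at hsnd

theorem IsAcyclic.eq_of_adj_of_snd_eq (hG : G.IsAcyclic) {x y w w' : V} (hxy : G.Adj x y)
    {p : G.Walk x w} {q : G.Walk y w'} (hp : p.IsPath) (hq : q.IsPath) (hpy : p.snd = y)
    (hqx : q.snd = x) (hadj : G.Adj w w') : w' = x := by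
  cases q with
  | nil => exact absurd hqx hxy.ne'
  | cons hyx s =>
    rw [Walk.snd_cons] at hqx
    subst hqx
    rw [Walk.cons_isPath_iff] at hq
    have hsnd : p.snd ≠ s.snd := fun h ↦ hq.2 (hpy ▸ h ▸ s.getVert_mem_support 1)
    refine (hG.eq_or_eq_of_adj_of_snd_ne hp hq.1 hadj hsnd).resolve_left ?_
    rintro rfl
    rw [Walk.eq_nil_iff_nil.mpr (Walk.isPath_iff_nil.mp hp)] at hpy
    exact hxy.ne hpy

def Walk.iterate (f : V → V) (hf : ∀ v, G.Adj v (f v)) : (n : ℕ) → (v : V) → G.Walk v (f^[n] v)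
  | 0, _ => .nil
  | n + 1, v => .cons (hf v) (iterate f hf n (f v))

@[simp]
theorem Walk.length_iterate (f : V → V) (hf : ∀ v, G.Adj v (f v)) (n : ℕ) (v : V) :
    (Walk.iterate f hf n v).length = n := by
  induction n generalizing v <;> simp [Walk.iterate, *]

theorem IsAcyclic.isPath_iterate (hG : G.IsAcyclic) (f : V → V) (hf : ∀ v, G.Adj v (f v))
    (hf₂ : ∀ v, f (f v) ≠ v) (n : ℕ) (v : V) : (Walk.iterate f hf n v).IsPath := by
  rw [hG.isPath_iff_isChain]
  induction n generalizing v with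
  | zero => simp [Walk.iterate]
  | succ n ih =>
    refine List.isChain_cons.mpr ⟨?_, ih (f v)⟩
    cases n with
    | zero => simp [Walk.iterate]
    | succ n =>
      simp [Walk.iterate, (hf v).ne, (hf₂ v).symm]

theorem IsAcyclic.exists_apply_apply_eq [Fintype V] [Nonempty V] (hG : G.IsAcyclic)
    (f : V → V) (hf : ∀ v, G.Adj v (f v)) : ∃ v, f (f v) = v := by
  by_contra! hf₂
  obtain ⟨v⟩ := ‹Nonempty V›
  have := (hG.isPath_iterate f hf hf₂ (Fintype.card V) v).length_lt
  simp at this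

end SimpleGraph

/-- Every automorphism of a finite tree either fixes some vertex, or there
exist adjacent vertices `u, v` such that `P u = v` and `P v = u` (i.e. `P` maps some edge to
itself). -/
theorem stmt_4 {V : Type*} [Fintype V] (G : SimpleGraph V) (hG : G.IsTree)
    (P : Equiv.Perm V) (hP : ∀ x y : V, G.Adj x y ↔ G.Adj (P x) (P y)) :
    (∃ x : V, P x = x) ∨ (∃ u v : V, G.Adj u v ∧ P u = v ∧ P v = u) := by
  by_contra! ⟨hfix, hswap⟩
  choose path hpath using fun v ↦ (hG.connected v (P v)).exists_isPath
  let f v := (path v).snd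
  have hf v : G.Adj v (f v) := (path v).adj_snd (SimpleGraph.Walk.not_nil_of_ne (hfix v).symm)
  have := hG.connected.nonempty
  obtain ⟨x, hx⟩ := hG.isAcyclic.exists_apply_apply_eq f hf
  have hPx := hG.isAcyclic.eq_of_adj_of_snd_eq (hf x).symm (hpath (f x)) (hpath x) hx rfl
    ((hP _ _).mp (hf x).symm)
  have hPfx := hG.isAcyclic.eq_of_adj_of_snd_eq (hf x) (hpath x) (hpath (f x)) rfl hx
    ((hP _ _).mp (hf x))
  exact hswap x (f x) (hf x) hPx hPfx
end

section
/- Let n ≥ 4 and define b₊ : ℝⁿ → ℝⁿ by b₊(x₁, x₂, …, x_{n-1}, x_n) = (2x₁, x₂/2, …, x_{n-1}/2, x_n/2). Let 𝕌 = {x ∈ ℝⁿ : x₁²(x₂² + ⋯ + x_n²) ≤ 1} and ℕᵘ = 𝕌 ∖ {x : x₁ = 0}; the set ℕᵘ is invariant under b₊, and ℤ acts on ℕᵘ by k · x = b₊^k(x). Then the quotient space ℕᵘ/ℤ (with the quotient topology) has exactly two connected components, and each of them is homeomorphic to B^{n-1} × S¹. -/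
/-!
Write `x₀` for the first coordinate (`x 0`, the paper's `x₁`) and `w = x₀ · (x₁, …, x_{n-1})`.
The map `x ↦ (x₀, w)` identifies `ℕᵘ` with `ℝˣ × B^{n-1}`, and `b₊` becomes `(x₀, w) ↦ (2x₀, w)`.
Hence the sign of `x₀`, the vector `w` and the phase `exp (2πi log₂ |x₀|)` are invariants which
separate orbits and take every value in `Bool × B^{n-1} × S¹`. The quotient is compact, as every
orbit meets the compact slab `1 ≤ |x₀| ≤ 2`, so the induced continuous bijection is a
homeomorphism; its components are the two sign classes.
-/

open Metric Set

section QuotHomeomorph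

variable {X Y : Type*} [TopologicalSpace X] [TopologicalSpace Y] {r : X → X → Prop}

theorem Quot.compactSpace_of_isCompact {K : Set X} (hK : IsCompact K)
    (hrep : ∀ x, ∃ y ∈ K, Quot.mk r y = Quot.mk r x) : CompactSpace (Quot r) where
  isCompact_univ := by
    convert hK.image (continuous_quot_mk (r := r))
    refine (eq_univ_of_forall fun q => ?_).symm
    obtain ⟨x, rfl⟩ := Quot.exists_rep q
    exact hrep x

noncomputable def Quot.homeomorphOfLift [CompactSpace (Quot r)] [T2Space Y] (f : X → Y)
    (hf : Continuous f) (hr : ∀ a b, r a b → f a = f b)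
    (hinj : ∀ a b, f a = f b → Quot.mk r a = Quot.mk r b) (hsurj : Function.Surjective f) :
    Quot r ≃ₜ Y :=
  have hbij : Function.Bijective (Quot.lift f hr) :=
    ⟨fun p q => Quot.induction_on₂ p q hinj, fun y => let ⟨x, hx⟩ := hsurj y; ⟨Quot.mk r x, hx⟩⟩
  (continuous_quot_lift hr hf).homeoOfEquivCompactToT2 (f := Equiv.ofBijective _ hbij)

end QuotHomeomorph

section DiscreteProd

variable {X ι T : Type*} [TopologicalSpace X] [TopologicalSpace ι] [DiscreteTopology ι]
  [TopologicalSpace T] [ConnectedSpace T]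

theorem connectedComponent_prod_of_discrete (p : ι × T) :
    connectedComponent p = {p.1} ×ˢ univ := by
  rw [← Prod.mk.eta (p := p), connectedComponent_prod, connectedComponent_eq_singleton,
    PreconnectedSpace.connectedComponent_eq_univ]

theorem Homeomorph.image_connectedComponent {Y : Type*} [TopologicalSpace Y] (h : X ≃ₜ Y)
    (x : X) : h '' connectedComponent x = connectedComponent (h x) := by
  simpa [connectedComponentIn_univ] using h.image_connectedComponentIn (mem_univ x)

noncomputable def Homeomorph.connectedComponentsEquivOfProd (h : X ≃ₜ ι × T) :
    ConnectedComponents X ≃ ι where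
  toFun := (continuous_fst.comp h.continuous).connectedComponentsLift
  invFun i := h.symm (i, Classical.arbitrary T)
  left_inv := by
    intro c
    obtain ⟨x, rfl⟩ := ConnectedComponents.surjective_coe c
    rw [Continuous.connectedComponentsLift_apply_coe]
    refine ConnectedComponents.coe_eq_coe'.2 ?_
    rw [← h.symm_apply_apply x, ← h.symm.image_connectedComponent]
    refine mem_image_of_mem _ ?_
    simp [connectedComponent_prod_of_discrete]
  right_inv i := by simp

noncomputable def Homeomorph.connectedComponentHomeomorphOfProd (h : X ≃ₜ ι × T) (x : X) :
    connectedComponent x ≃ₜ T :=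
  (h.image _).trans <| (Homeomorph.setCongr <| by
    rw [h.image_connectedComponent, connectedComponent_prod_of_discrete]).trans <|
    (Homeomorph.Set.prod _ _).trans <| (Homeomorph.uniqueProd _ _).trans (Homeomorph.Set.univ T)

end DiscreteProd

theorem exists_abs_two_zpow_mul_mem_Icc {x : ℝ} (hx : x ≠ 0) : ∃ k : ℤ, |2 ^ k * x| ∈ Icc 1 2 := by
  obtain ⟨k, hk₁, hk₂⟩ := exists_mem_Ico_zpow (abs_pos.2 hx) one_lt_two
  have h2k : (0 : ℝ) < 2 ^ k := by positivity
  refine ⟨-k, ?_, ?_⟩ <;> rw [abs_mul, abs_of_pos (by positivity), zpow_neg, ← div_eq_inv_mul]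
  · exact (one_le_div₀ h2k).2 hk₁
  · rw [div_le_iff₀ h2k, mul_comm, ← zpow_add_one₀ (two_ne_zero : (2 : ℝ) ≠ 0)]
    exact hk₂.le

noncomputable section
namespace DilationQuotient
open Real

abbrev E (m : ℕ) := EuclideanSpace ℝ (Fin (m + 1))

abbrev Ball (m : ℕ) := closedBall (0 : EuclideanSpace ℝ (Fin m)) 1

instance (m : ℕ) : ConnectedSpace (Ball m) :=
  isConnected_iff_connectedSpace.1 ((convex_closedBall _ _).isConnected ⟨0, by simp⟩)

variable {m : ℕ}

def boost (x : E m) : E m := WithLp.toLp 2 fun i => if i = 0 then 2 * x 0 else x i / 2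

def domain (m : ℕ) : Set (E m) :=
  {x | x 0 ^ 2 * ∑ i ∈ Finset.univ.filter (fun i => i ≠ 0), x i ^ 2 ≤ 1} \ {x | x 0 = 0}

abbrev Q (m : ℕ) := Quot fun a b : domain m => boost (a : E m) = b

def scaledTail (x : E m) : EuclideanSpace ℝ (Fin m) := WithLp.toLp 2 fun i => x 0 * x i.succ

theorem norm_scaledTail_sq (x : E m) :
    ‖scaledTail x‖ ^ 2 = x 0 ^ 2 * ∑ i ∈ Finset.univ.filter (fun i => i ≠ 0), x i ^ 2 := by
  rw [EuclideanSpace.norm_sq_eq, Finset.filter_ne', Finset.sum_erase_eq_sub (Finset.mem_univ _),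
    Fin.sum_univ_succ, add_sub_cancel_left, Finset.mul_sum]
  simp [scaledTail, mul_pow]

theorem mem_domain {x : E m} : x ∈ domain m ↔ ‖scaledTail x‖ ≤ 1 ∧ x 0 ≠ 0 := by
  rw [← sq_le_one_iff₀ (norm_nonneg _), norm_scaledTail_sq]
  rfl

theorem boost_apply_zero (x : E m) : boost x 0 = 2 * x 0 := by simp [boost]

theorem scaledTail_boost (x : E m) : scaledTail (boost x) = scaledTail x := by
  ext i
  simp only [scaledTail, boost, Fin.succ_ne_zero, if_true, if_false]
  ring

theorem eq_of_apply_zero_eq_of_scaledTail_eq {x y : E m} (h0 : x 0 = y 0) (hy : y 0 ≠ 0)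
    (hw : scaledTail x = scaledTail y) : x = y := by
  ext i
  cases i using Fin.cases with
  | zero => exact h0
  | succ i =>
    have := congr($hw i)
    simp only [scaledTail, PiLp.toLp_apply, h0] at this
    exact mul_left_cancel₀ hy this

-- The inverse of `x ↦ (x 0, scaledTail x)` on `x 0 ≠ 0`.
def ofCoords (t : ℝ) (w : EuclideanSpace ℝ (Fin m)) : E m :=
  WithLp.toLp 2 (Fin.cons t fun i => w i / t)

@[simp]
theorem ofCoords_apply_zero (t : ℝ) (w : EuclideanSpace ℝ (Fin m)) : ofCoords t w 0 = t := rfl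

theorem scaledTail_ofCoords {t : ℝ} (ht : t ≠ 0) (w : EuclideanSpace ℝ (Fin m)) :
    scaledTail (ofCoords t w) = w := by
  ext i
  simp [scaledTail, ofCoords, mul_div_cancel₀ _ ht]

theorem ofCoords_mem_domain {t : ℝ} (ht : t ≠ 0) {w : EuclideanSpace ℝ (Fin m)} (hw : ‖w‖ ≤ 1) :
    ofCoords t w ∈ domain m :=
  mem_domain.2 ⟨by rwa [scaledTail_ofCoords ht], ht⟩

theorem continuousOn_ofCoords :
    ContinuousOn (fun p : ℝ × EuclideanSpace ℝ (Fin m) => ofCoords p.1 p.2) {p | p.1 ≠ 0} := by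
  refine (PiLp.continuous_toLp 2 _).comp_continuousOn (continuousOn_pi.2 fun i => ?_)
  cases i using Fin.cases with
  | zero => exact continuous_fst.continuousOn
  | succ i =>
    have hw : Continuous fun p : ℝ × EuclideanSpace ℝ (Fin m) => p.2 i := by fun_prop
    exact hw.continuousOn.div continuous_fst.continuousOn fun _ hp => hp

theorem mk_eq_mk_of_boost_eq {a b : domain m} (h : boost (a : E m) = b) :
    (Quot.mk _ a : Q m) = Quot.mk _ b :=
  Quot.sound h

theorem mk_eq_mk_of_apply_zero_eq_zpow_mul {a b : domain m} (k : ℤ)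
    (h0 : (a : E m) 0 = 2 ^ k * (b : E m) 0) (hw : scaledTail (a : E m) = scaledTail b) :
    (Quot.mk _ a : Q m) = Quot.mk _ b := by
  obtain ⟨hb1, hb0⟩ := mem_domain.1 b.2
  let c (j : ℤ) : domain m :=
    ⟨ofCoords (2 ^ j * (b : E m) 0) (scaledTail b), ofCoords_mem_domain (by positivity) hb1⟩
  have hc0 (j : ℤ) : (c j : E m) 0 ≠ 0 := mul_ne_zero (zpow_ne_zero _ two_ne_zero) hb0
  have hc (j : ℤ) : scaledTail (c j : E m) = scaledTail b := scaledTail_ofCoords (hc0 j) _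
  induction k using Int.induction_on generalizing a with
  | zero =>
    rw [zpow_zero, one_mul] at h0
    rw [Subtype.ext (eq_of_apply_zero_eq_of_scaledTail_eq h0 hb0 hw)]
  | succ k ih =>
    rw [← ih (a := c k) rfl (hc k)]
    have hboost : boost (c k : E m) = a := by
      refine eq_of_apply_zero_eq_of_scaledTail_eq ?_ (mem_domain.1 a.2).2 ?_
      · simp [c, boost_apply_zero, h0, zpow_add_one₀]
        ring
      · rw [scaledTail_boost, hc, hw]
    exact (mk_eq_mk_of_boost_eq hboost).symm
  | pred k ih =>
    rw [← ih (a := c (-k)) rfl (hc _)]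
    have hboost : boost (a : E m) = c (-k) := by
      refine eq_of_apply_zero_eq_of_scaledTail_eq ?_ (hc0 _) ?_
      · simp [c, boost_apply_zero, h0, zpow_sub_one₀]
        ring
      · rw [scaledTail_boost, hc, hw]
    exact mk_eq_mk_of_boost_eq hboost

instance : CompactSpace (Q m) := by
  have hne {t : ℝ} (ht : |t| ∈ Icc 1 2) : t ≠ 0 := abs_pos.1 (one_pos.trans_le ht.1)
  let K : Set (E m) := (fun p => ofCoords p.1 p.2) '' ({t : ℝ | |t| ∈ Icc 1 2} ×ˢ Ball m)
  have hK : IsCompact K := by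
    refine IsCompact.image_of_continuousOn ?_ (continuousOn_ofCoords.mono fun p hp => hne hp.1)
    exact ((isCompact_Icc (a := -2) (b := 2)).of_isClosed_subset
      (isClosed_Icc.preimage continuous_abs) fun t ht => abs_le.1 ht.2).prod
      (isCompact_closedBall 0 1)
  have hKdom : K ⊆ domain m := by
    rintro _ ⟨⟨t, w⟩, ⟨ht, hw⟩, rfl⟩
    exact ofCoords_mem_domain (hne ht) (mem_closedBall_zero_iff.1 hw)
  refine Quot.compactSpace_of_isCompact (K := Subtype.val ⁻¹' K) ?_ fun a => ?_
  · rwa [Subtype.isCompact_iff, Subtype.image_preimage_coe, inter_eq_right.2 hKdom]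
  obtain ⟨hw, ha0⟩ := mem_domain.1 a.2
  obtain ⟨k, hk⟩ := exists_abs_two_zpow_mul_mem_Icc ha0
  refine ⟨⟨_, ofCoords_mem_domain (hne hk) hw⟩,
    ⟨(_, _), ⟨hk, mem_closedBall_zero_iff.2 hw⟩, rfl⟩, ?_⟩
  exact mk_eq_mk_of_apply_zero_eq_zpow_mul k rfl (scaledTail_ofCoords (hne hk) _)

def phase (x : E m) : Circle := Circle.exp (2 * π * logb 2 |x 0|)

def invariant (a : domain m) : Bool × Ball m × Circle :=
  (decide (0 < (a : E m) 0), ⟨scaledTail a, mem_closedBall_zero_iff.2 (mem_domain.1 a.2).1⟩,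
    phase (a : E m))

theorem phase_boost {x : E m} (hx : x 0 ≠ 0) : phase (boost x) = phase x := by
  rw [phase, phase, boost_apply_zero, abs_mul, abs_two, logb_mul two_ne_zero (abs_ne_zero.2 hx),
    logb_self_eq_one one_lt_two, mul_add, mul_one, Circle.exp_add, Circle.exp_two_pi, one_mul]

theorem invariant_eq_of_boost_eq {a b : domain m} (h : boost (a : E m) = b) :
    invariant a = invariant b := by
  obtain ⟨b, hb⟩ := b
  subst h
  simp [invariant, boost_apply_zero, scaledTail_boost, phase_boost (mem_domain.1 a.2).2]

theorem continuous_invariant : Continuous (invariant (m := m)) := by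
  have h0 : Continuous fun a : domain m => (a : E m) 0 := by fun_prop
  refine .prodMk ((continuous_bool_rng true).2 ⟨?_, ?_⟩) (.prodMk ?_ ?_)
  · convert isClosed_le continuous_const h0 using 1
    ext a
    simpa using (mem_domain.1 a.2).2.symm.le_iff_lt.symm
  · convert isOpen_lt (continuous_const (y := (0 : ℝ))) h0 using 1
    ext a
    simp
  · exact (Continuous.subtype_mk (by unfold scaledTail; fun_prop) _)
  · have := h0.abs.logb (b := 2) fun a => abs_ne_zero.2 (mem_domain.1 a.2).2
    exact Circle.exp.continuous.comp (continuous_const.mul this)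

theorem mk_eq_mk_of_invariant_eq {a b : domain m} (h : invariant a = invariant b) :
    (Quot.mk _ a : Q m) = Quot.mk _ b := by
  obtain ⟨hsign, hw, hphase⟩ : decide (0 < (a : E m) 0) = decide (0 < (b : E m) 0) ∧
      scaledTail (a : E m) = scaledTail b ∧ phase (a : E m) = phase b := by
    simpa [invariant] using h
  obtain ⟨k, hk⟩ := Circle.exp_eq_exp.1 hphase
  have ha0 := (mem_domain.1 a.2).2
  have hb0 := (mem_domain.1 b.2).2
  have habs : |(a : E m) 0| = 2 ^ k * |(b : E m) 0| := by
    have hlog : logb 2 |(a : E m) 0| = logb 2 |(b : E m) 0| + k :=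
      mul_left_cancel₀ (by positivity : 2 * π ≠ 0) (hk.trans (by ring))
    rw [← rpow_logb two_pos one_lt_two.ne' (abs_pos.2 ha0), hlog, rpow_add two_pos,
      rpow_logb two_pos one_lt_two.ne' (abs_pos.2 hb0), rpow_intCast, mul_comm]
  refine mk_eq_mk_of_apply_zero_eq_zpow_mul k ?_ hw
  rcases hb0.lt_or_gt with hb | hb
  · have ha : (a : E m) 0 < 0 := by simpa [hb.not_gt, ha0.le_iff_lt] using hsign
    rw [abs_of_neg ha, abs_of_neg hb] at habs
    linarith
  · have ha : 0 < (a : E m) 0 := by simpa [hb] using hsign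
    rwa [abs_of_pos ha, abs_of_pos hb] at habs

theorem invariant_surjective : Function.Surjective (invariant (m := m)) := by
  rintro ⟨s, ⟨w, hw⟩, z⟩
  obtain ⟨θ, rfl⟩ := Circle.exp_surjective z
  set r : ℝ := 2 ^ (θ / (2 * π))
  have hr : 0 < r := by positivity
  set t : ℝ := if s then r else -r
  have ht : |t| = r := by cases s <;> simp [t, abs_of_pos hr]
  have ht0 : t ≠ 0 := abs_pos.1 (ht ▸ hr)
  refine ⟨⟨ofCoords t w, ofCoords_mem_domain ht0 (mem_closedBall_zero_iff.1 hw)⟩, ?_⟩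
  simp only [invariant, phase, ofCoords_apply_zero, ht, r, logb_rpow two_pos one_lt_two.ne',
    mul_div_cancel₀ θ (by positivity : 2 * π ≠ 0)]
  refine Prod.ext ?_ (Prod.ext (Subtype.ext (scaledTail_ofCoords ht0 w)) rfl)
  cases s <;> simp [t, hr, hr.le]

def quotientHomeomorph (m : ℕ) : Q m ≃ₜ Bool × Ball m × Circle :=
  Quot.homeomorphOfLift invariant continuous_invariant (fun _ _ => invariant_eq_of_boost_eq)
    (fun _ _ => mk_eq_mk_of_invariant_eq) invariant_surjective

end DilationQuotient
end

theorem stmt_12_general (n : ℕ) [NeZero n]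
    (bp : EuclideanSpace ℝ (Fin n) → EuclideanSpace ℝ (Fin n))
    (hbp : bp = fun x => WithLp.toLp 2 (fun i : Fin n => if i = 0 then 2 * x 0 else x i / 2))
    (U Nu : Set (EuclideanSpace ℝ (Fin n)))
    (hU : U = {x | (x 0) ^ 2 *
      (∑ i ∈ Finset.univ.filter (fun i : Fin n => i ≠ 0), (x i) ^ 2) ≤ 1})
    (hNu : Nu = U \ {x | x 0 = 0}) :
    Nonempty (ConnectedComponents (Quot (fun a b : ↥Nu => bp ↑a = ↑b)) ≃ Fin 2) ∧
    ∀ q : Quot (fun a b : ↥Nu => bp ↑a = ↑b),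
      Nonempty (↥(connectedComponent q) ≃ₜ
        (↥(Metric.closedBall (0 : EuclideanSpace ℝ (Fin (n - 1))) 1) × Circle)) := by
  obtain ⟨m, rfl⟩ : ∃ m, n = m + 1 := Nat.exists_eq_add_one.2 (NeZero.pos n)
  subst hbp hU hNu
  let h := DilationQuotient.quotientHomeomorph m
  exact ⟨⟨h.connectedComponentsEquivOfProd.trans finTwoEquiv.symm⟩,
    fun q => ⟨h.connectedComponentHomeomorphOfProd q⟩⟩

/-- Let `n ≥ 4` and define `b₊ : ℝⁿ → ℝⁿ` by
`b₊(x₁, x₂, …, x_{n-1}, x_n) = (2x₁, x₂/2, …, x_{n-1}/2, x_n/2)`. Let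
`𝕌 = {x ∈ ℝⁿ : x₁²(x₂² + ⋯ + x_n²) ≤ 1}` and `ℕᵘ = 𝕌 ∖ {x : x₁ = 0}`; the set `ℕᵘ` is
invariant under `b₊`, and `ℤ` acts on `ℕᵘ` by `k · x = b₊^k(x)`. Then the quotient space
`ℕᵘ/ℤ` has exactly two connected components, and each of them is homeomorphic to
`B^{n-1} × S¹`. -/
theorem stmt_12 (n : ℕ) (hn : 4 ≤ n) [NeZero n]
    (bp : EuclideanSpace ℝ (Fin n) → EuclideanSpace ℝ (Fin n))
    (hbp : bp = fun x => WithLp.toLp 2 (fun i : Fin n => if i = 0 then 2 * x 0 else x i / 2))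
    (U Nu : Set (EuclideanSpace ℝ (Fin n)))
    (hU : U = {x | (x 0) ^ 2 *
      (∑ i ∈ Finset.univ.filter (fun i : Fin n => i ≠ 0), (x i) ^ 2) ≤ 1})
    (hNu : Nu = U \ {x | x 0 = 0}) :
    Nonempty (ConnectedComponents (Quot (fun a b : ↥Nu => bp ↑a = ↑b)) ≃ Fin 2) ∧
    ∀ q : Quot (fun a b : ↥Nu => bp ↑a = ↑b),
      Nonempty (↥(connectedComponent q) ≃ₜ
        (↥(Metric.closedBall (0 : EuclideanSpace ℝ (Fin (n - 1))) 1) × Circle)) :=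
  stmt_12_general n bp hbp U Nu hU hNu
end

section
/- Let n ≥ 4 and define b₋ : ℝⁿ → ℝⁿ by b₋(x₁, x₂, …, x_{n-1}, x_n) = (−2x₁, x₂/2, …, x_{n-1}/2, −x_n/2). Let 𝕌 = {x ∈ ℝⁿ : x₁²(x₂² + ⋯ + x_n²) ≤ 1} and ℕᵘ = 𝕌 ∖ {x : x₁ = 0}; the set ℕᵘ is invariant under b₋, and ℤ acts on ℕᵘ by k · x = b₋^k(x). Then the quotient space ℕᵘ/ℤ (with the quotient topology) is homeomorphic to B^{n-1} × S¹. -/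
/-!
Write `x = (x₀, y)` with `y ∈ ℝⁿ⁻¹`. The map `b₋` is the diagonal scaling `diagScale (-2)`, where
`diagScale t` multiplies `x₀` by `t`, the last coordinate of `y` by `t⁻¹` and the others by
`|t|⁻¹`. Every `diagScale t` fixes `ballCoord x = (|x₀| y₁, …, |x₀| y_{n-2}, x₀ y_{n-1})`, whose
squared norm is `x₀² ‖y‖²`, so `x ↦ (ballCoord x, x₀)` identifies `ℕᵘ` with `B^{n-1} × ℝˣ` and
turns `b₋` into `id × (t ↦ -2t)`. The character `t ↦ exp (iπ (log₂ |t| + [t < 0]))` of `ℝˣ` has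
kernel generated by `-2`, so `(ballCoord x, negTwoPhase x₀)` descends to a continuous bijection
`ℕᵘ/ℤ → B^{n-1} × S¹`. The quotient is compact, being the image of `B^{n-1} × [1, 4]`, hence the
bijection is a homeomorphism.
-/

open Metric Real

theorem Quot.mk_eq_mk_of_chain {X : Type*} {r : X → X → Prop} (u : ℤ → X)
    (hu : ∀ k, r (u k) (u (k + 1))) (k : ℤ) : Quot.mk r (u k) = Quot.mk r (u 0) := by
  induction k using Int.induction_on with
  | zero => rfl
  | succ k ih => rw [← ih]; exact (Quot.sound (hu k)).symm
  | pred k ih => rw [← ih]; exact Quot.sound (by simpa using hu (-k - 1))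

theorem Quot.nonempty_homeomorph_of_isCompact {X Y : Type*} [TopologicalSpace X]
    [TopologicalSpace Y] [T2Space Y] {r : X → X → Prop} (f : X → Y) (hf : Continuous f)
    (hr : ∀ a b, r a b → f a = f b) (hsurj : Function.Surjective f)
    (hinj : ∀ a b, f a = f b → Quot.mk r a = Quot.mk r b) {K : Set X} (hK : IsCompact K)
    (hKr : ∀ x, ∃ y ∈ K, Quot.mk r y = Quot.mk r x) : Nonempty (Quot r ≃ₜ Y) := by
  have : CompactSpace (Quot r) := by
    refine ⟨(hK.image continuous_quot_mk).of_isClosed_subset isClosed_univ fun q _ => ?_⟩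
    induction q using Quot.ind with
    | mk x => obtain ⟨y, hy, hyx⟩ := hKr x; exact ⟨y, hy, hyx⟩
  have hbij : Function.Bijective (Quot.lift f hr) := by
    refine ⟨fun p q => ?_, fun y => ?_⟩
    · induction p using Quot.ind
      induction q using Quot.ind
      exact hinj _ _
    · obtain ⟨x, rfl⟩ := hsurj y
      exact ⟨Quot.mk r x, rfl⟩
  exact ⟨(continuous_quot_lift hr hf).homeoOfEquivCompactToT2 (f := Equiv.ofBijective _ hbij)⟩

noncomputable section Coordinates

variable {m : ℕ}

def diagScale (t : ℝ) (x : EuclideanSpace ℝ (Fin (m + 1))) : EuclideanSpace ℝ (Fin (m + 1)) :=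
  WithLp.toLp 2 fun i => if i = 0 then t * x 0 else if (i : ℕ) = m then t⁻¹ * x i else |t|⁻¹ * x i

def ballCoord (x : EuclideanSpace ℝ (Fin (m + 1))) : EuclideanSpace ℝ (Fin m) :=
  WithLp.toLp 2 fun i => (if (i : ℕ) + 1 = m then x 0 else |x 0|) * x i.succ

def ofBallCoord (w : EuclideanSpace ℝ (Fin m)) : EuclideanSpace ℝ (Fin (m + 1)) :=
  WithLp.toLp 2 (Fin.cons 1 w.ofLp)

@[simp]
theorem diagScale_apply_zero (t : ℝ) (x : EuclideanSpace ℝ (Fin (m + 1))) :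
    diagScale t x 0 = t * x 0 := by
  simp [diagScale]

theorem diagScale_apply_succ (t : ℝ) (x : EuclideanSpace ℝ (Fin (m + 1))) (i : Fin m) :
    diagScale t x i.succ = (if (i : ℕ) + 1 = m then t⁻¹ else |t|⁻¹) * x i.succ := by
  simp only [diagScale, PiLp.toLp_apply, Fin.succ_ne_zero, if_false, Fin.val_succ]
  split_ifs <;> rfl

theorem ballCoord_apply (x : EuclideanSpace ℝ (Fin (m + 1))) (i : Fin m) :
    ballCoord x i = (if (i : ℕ) + 1 = m then x 0 else |x 0|) * x i.succ :=
  rfl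

theorem diagScale_one (x : EuclideanSpace ℝ (Fin (m + 1))) : diagScale 1 x = x := by
  ext j
  induction j using Fin.cases with
  | zero => simp
  | succ i => simp [diagScale_apply_succ]

theorem diagScale_diagScale (s t : ℝ) (x : EuclideanSpace ℝ (Fin (m + 1))) :
    diagScale s (diagScale t x) = diagScale (s * t) x := by
  ext j
  induction j using Fin.cases with
  | zero => simp [mul_assoc]
  | succ i =>
    simp only [diagScale_apply_succ, abs_mul, mul_inv]
    split_ifs <;> ring

theorem ballCoord_diagScale {t : ℝ} (ht : t ≠ 0) (x : EuclideanSpace ℝ (Fin (m + 1))) :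
    ballCoord (diagScale t x) = ballCoord x := by
  ext i
  simp only [ballCoord_apply, diagScale_apply_zero, diagScale_apply_succ, abs_mul]
  split_ifs <;> field_simp

theorem eq_diagScale_of_ballCoord_eq {a b : EuclideanSpace ℝ (Fin (m + 1))} {t : ℝ}
    (ha : a 0 ≠ 0) (ht : t ≠ 0) (hab : ballCoord a = ballCoord b) (h0 : b 0 = t * a 0) :
    b = diagScale t a := by
  ext j
  induction j using Fin.cases with
  | zero => simpa using h0
  | succ i =>
    have hi := congr($hab i)
    simp only [ballCoord_apply, h0, abs_mul] at hi
    rw [diagScale_apply_succ]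
    split_ifs at hi ⊢
    · have : a i.succ = t * b i.succ := mul_left_cancel₀ ha (by linear_combination hi)
      rw [this, inv_mul_cancel_left₀ ht]
    · have : a i.succ = |t| * b i.succ :=
        mul_left_cancel₀ (abs_ne_zero.2 ha) (by linear_combination hi)
      rw [this, inv_mul_cancel_left₀ (abs_ne_zero.2 ht)]

theorem norm_ballCoord_sq (x : EuclideanSpace ℝ (Fin (m + 1))) :
    ‖ballCoord x‖ ^ 2 = x 0 ^ 2 * ∑ i ∈ Finset.univ.filter (· ≠ 0), x i ^ 2 := by
  rw [EuclideanSpace.norm_sq_eq, Finset.sum_filter, Fin.sum_univ_succ]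
  simp only [ne_eq, not_true_eq_false, if_false, zero_add, Fin.succ_ne_zero, not_false_eq_true,
    if_true, Real.norm_eq_abs, sq_abs, Finset.mul_sum]
  refine Finset.sum_congr rfl fun i _ => ?_
  rw [ballCoord_apply]
  split_ifs <;> simp [mul_pow]

@[simp]
theorem ofBallCoord_apply_zero (w : EuclideanSpace ℝ (Fin m)) : ofBallCoord w 0 = 1 :=
  rfl

@[simp]
theorem ballCoord_ofBallCoord (w : EuclideanSpace ℝ (Fin m)) : ballCoord (ofBallCoord w) = w := by
  ext i
  simp [ballCoord_apply, ofBallCoord]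

theorem continuous_ballCoord : Continuous (ballCoord (m := m)) := by
  refine (PiLp.continuous_toLp 2 _).comp (continuous_pi fun i => ?_)
  split_ifs <;> fun_prop

theorem Continuous.diagScale {X : Type*} [TopologicalSpace X] {t : X → ℝ}
    {x : X → EuclideanSpace ℝ (Fin (m + 1))} (ht : Continuous t) (ht0 : ∀ a, t a ≠ 0)
    (hx : Continuous x) : Continuous fun a => diagScale (t a) (x a) := by
  refine (PiLp.continuous_toLp 2 _).comp (continuous_pi fun i => ?_)
  have hinv : Continuous fun a => (t a)⁻¹ := ht.inv₀ ht0
  have habsinv : Continuous fun a => |t a|⁻¹ := ht.abs.inv₀ fun a => abs_ne_zero.2 (ht0 a)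
  split_ifs <;> fun_prop

theorem continuous_ofBallCoord : Continuous (ofBallCoord (m := m)) :=
  (PiLp.continuous_toLp 2 _).comp (continuous_const.finCons (PiLp.continuous_ofLp 2 _))

end Coordinates

noncomputable def negTwoPhase (t : ℝ) : Circle :=
  Circle.exp (π * (logb 2 t + if t < 0 then 1 else 0))

theorem negTwoPhase_mul {s t : ℝ} (hs : s ≠ 0) (ht : t ≠ 0) :
    negTwoPhase (s * t) = negTwoPhase s * negTwoPhase t := by
  simp only [negTwoPhase, ← Circle.exp_add, logb_mul hs ht]
  rcases hs.lt_or_gt with hs | hs <;> rcases ht.lt_or_gt with ht | ht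
  · rw [if_pos hs, if_pos ht, if_neg (mul_pos_of_neg_of_neg hs ht).not_gt]
    exact Circle.exp_eq_exp.2 ⟨-1, by push_cast; ring⟩
  · simp only [hs, ht.not_gt, mul_neg_of_neg_of_pos hs ht, if_true, if_false]
    ring_nf
  · simp only [hs.not_gt, ht, mul_neg_of_pos_of_neg hs ht, if_true, if_false]
    ring_nf
  · simp only [hs.not_gt, ht.not_gt, (mul_pos hs ht).not_gt, if_false]
    ring_nf

theorem negTwoPhase_neg_two : negTwoPhase (-2) = 1 := by
  rw [negTwoPhase, logb_neg_eq_logb, logb_self_eq_one one_lt_two, if_pos (by norm_num),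
    ← Circle.exp_two_pi]
  ring_nf

theorem negTwoPhase_neg_two_mul {t : ℝ} (ht : t ≠ 0) : negTwoPhase (-2 * t) = negTwoPhase t := by
  rw [negTwoPhase_mul (by norm_num) ht, negTwoPhase_neg_two, one_mul]

theorem exists_zpow_of_negTwoPhase_eq_one {u : ℝ} (hu : u ≠ 0) (h : negTwoPhase u = 1) :
    ∃ k : ℤ, u = (-2) ^ k := by
  rw [negTwoPhase, ← Circle.exp_zero, Circle.exp_eq_exp] at h
  obtain ⟨j, hj⟩ := h
  have hlog : logb 2 u = 2 * j - if u < 0 then 1 else 0 := by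
    have := mul_left_cancel₀ pi_ne_zero (hj.trans (by ring : _ = π * (2 * j)))
    linarith
  have habs : |u| = 2 ^ (2 * j - if u < 0 then 1 else 0 : ℤ) := by
    rw [← rpow_logb_eq_abs two_pos (by norm_num) hu, hlog, ← rpow_intCast]
    split_ifs <;> push_cast <;> rfl
  rcases hu.lt_or_gt with hneg | hpos
  · refine ⟨2 * j - 1, ?_⟩
    rw [if_pos hneg, abs_of_neg hneg] at habs
    rw [Odd.neg_zpow ⟨j - 1, by ring⟩, ← habs, neg_neg]
  · refine ⟨2 * j, ?_⟩
    rw [if_neg hpos.not_gt, sub_zero, abs_of_pos hpos] at habs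
    rw [Even.neg_zpow ⟨j, by ring⟩, habs]

theorem exists_zpow_of_negTwoPhase_eq {s t : ℝ} (hs : s ≠ 0) (ht : t ≠ 0)
    (h : negTwoPhase s = negTwoPhase t) : ∃ k : ℤ, t = (-2) ^ k * s := by
  have hmul := negTwoPhase_mul (div_ne_zero ht hs) hs
  rw [div_mul_cancel₀ t hs, ← h, right_eq_mul] at hmul
  obtain ⟨k, hk⟩ := exists_zpow_of_negTwoPhase_eq_one (div_ne_zero ht hs) hmul
  exact ⟨k, (div_eq_iff hs).1 hk⟩

theorem exists_pos_negTwoPhase_eq (c : Circle) : ∃ t, 0 < t ∧ negTwoPhase t = c := by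
  have hpos : (0 : ℝ) < 2 ^ (Complex.arg c / π) := rpow_pos_of_pos two_pos _
  refine ⟨_, hpos, ?_⟩
  rw [negTwoPhase, if_neg hpos.not_gt, logb_rpow two_pos (by norm_num), add_zero,
    mul_div_cancel₀ _ pi_ne_zero, Circle.exp_arg]

theorem continuousAt_negTwoPhase {t : ℝ} (ht : t ≠ 0) : ContinuousAt negTwoPhase t := by
  have hsign : ContinuousAt (fun s : ℝ => if s < 0 then (1 : ℝ) else 0) t := by
    rcases ht.lt_or_gt with hneg | hpos
    · exact continuousAt_const.congr
        ((eventually_lt_nhds hneg).mono fun s hs => (if_pos hs).symm)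
    · exact continuousAt_const.congr
        ((eventually_gt_nhds hpos).mono fun s hs => (if_neg hs.not_gt).symm)
  exact Circle.exp.continuous.continuousAt.comp
    (continuousAt_const.mul ((continuousAt_logb ht).add hsign))

theorem exists_zpow_mul_mem_Icc {s : ℝ} (hs : s ≠ 0) :
    ∃ k : ℤ, (-2 : ℝ) ^ k * s ∈ Set.Icc 1 4 := by
  obtain ⟨n, hn1, hn2⟩ := exists_mem_Ico_zpow (abs_pos.2 hs) one_lt_two
  set y := (-2 : ℝ) ^ (-n) * s with hy
  have hyabs : |y| = |s| / 2 ^ n := by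
    rw [hy, abs_mul, abs_zpow, abs_neg, abs_two, zpow_neg, inv_mul_eq_div]
  have h2n : (0 : ℝ) < 2 ^ n := zpow_pos two_pos n
  have hy1 : 1 ≤ |y| := by rw [hyabs, le_div_iff₀ h2n]; linarith
  have hy2 : |y| ≤ 2 := by
    rw [hyabs, div_le_iff₀ h2n, ← zpow_one_add₀ two_ne_zero, add_comm]; linarith
  rcases le_or_gt 0 y with hpos | hneg
  · exact ⟨-n, by rw [abs_of_nonneg hpos] at hy1 hy2; constructor <;> linarith⟩
  · refine ⟨-n + 1, ?_⟩
    rw [abs_of_neg hneg] at hy1 hy2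
    rw [zpow_add_one₀ (by norm_num), mul_comm _ (-2 : ℝ), mul_assoc, ← hy]
    constructor <;> linarith

def nuSet (m : ℕ) : Set (EuclideanSpace ℝ (Fin (m + 1))) :=
  {x | ‖ballCoord x‖ ≤ 1 ∧ x 0 ≠ 0}

theorem diagScale_mem_nuSet {m : ℕ} {t : ℝ} (ht : t ≠ 0) {x : EuclideanSpace ℝ (Fin (m + 1))}
    (hx : x ∈ nuSet m) : diagScale t x ∈ nuSet m :=
  ⟨by rw [ballCoord_diagScale ht]; exact hx.1, by simpa using mul_ne_zero ht hx.2⟩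

theorem ofBallCoord_mem_nuSet {m : ℕ} {w : EuclideanSpace ℝ (Fin m)}
    (hw : w ∈ closedBall (0 : EuclideanSpace ℝ (Fin m)) 1) : ofBallCoord w ∈ nuSet m :=
  ⟨by simpa using hw, by simp⟩

theorem quot_mk_diagScale_zpow {m : ℕ} (x : nuSet m) (k : ℤ) :
    Quot.mk (fun a b : nuSet m => diagScale (-2) a.1 = b.1)
      ⟨diagScale ((-2) ^ k) x, diagScale_mem_nuSet (zpow_ne_zero k (by norm_num)) x.2⟩ =
      Quot.mk _ x := by
  simpa [diagScale_one] using Quot.mk_eq_mk_of_chain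
    (r := fun a b : nuSet m => diagScale (-2) a.1 = b.1)
    (fun k => ⟨diagScale ((-2) ^ k) x, diagScale_mem_nuSet (zpow_ne_zero k (by norm_num)) x.2⟩)
    (fun k => by simp [diagScale_diagScale, zpow_add_one₀, mul_comm]) k

theorem nonempty_quot_diagScale_homeomorph (m : ℕ) :
    Nonempty (Quot (fun a b : nuSet m => diagScale (-2) a.1 = b.1) ≃ₜ
      closedBall (0 : EuclideanSpace ℝ (Fin m)) 1 × Circle) := by
  have hpow (k : ℤ) : (-2 : ℝ) ^ k ≠ 0 := zpow_ne_zero k (by norm_num)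
  let f (x : nuSet m) : closedBall (0 : EuclideanSpace ℝ (Fin m)) 1 × Circle :=
    (⟨ballCoord x.1, mem_closedBall_zero_iff.2 x.2.1⟩, negTwoPhase (x.1 0))
  let g (p : closedBall (0 : EuclideanSpace ℝ (Fin m)) 1 × Set.Icc (1 : ℝ) 4) : nuSet m :=
    ⟨diagScale p.2 (ofBallCoord p.1),
      diagScale_mem_nuSet (by linarith [p.2.2.1]) (ofBallCoord_mem_nuSet p.1.2)⟩
  have hg : Continuous g :=
    ((by fun_prop : Continuous fun p : _ × Set.Icc (1 : ℝ) 4 => (p.2 : ℝ)).diagScale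
      (fun p => by linarith [p.2.2.1]) (continuous_ofBallCoord.comp (by fun_prop))).subtype_mk _
  refine Quot.nonempty_homeomorph_of_isCompact f ?_ ?_ ?_ ?_ (isCompact_range hg) ?_
  · have h0 : Continuous fun x : nuSet m => x.1 0 := by fun_prop
    exact ((continuous_ballCoord.comp continuous_subtype_val).subtype_mk _).prodMk
      (continuous_iff_continuousAt.2 fun x =>
        (continuousAt_negTwoPhase x.2.2).comp (f := fun y : nuSet m => y.1 0) h0.continuousAt)
  · intro a b (hab : diagScale (-2) a.1 = b.1)
    simp only [f, ← hab, ballCoord_diagScale (by norm_num : (-2 : ℝ) ≠ 0), diagScale_apply_zero,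
      negTwoPhase_neg_two_mul a.2.2]
  · rintro ⟨⟨w, hw⟩, c⟩
    obtain ⟨t, ht, rfl⟩ := exists_pos_negTwoPhase_eq c
    refine ⟨⟨diagScale t (ofBallCoord w),
      diagScale_mem_nuSet ht.ne' (ofBallCoord_mem_nuSet hw)⟩, ?_⟩
    simp [f, ballCoord_diagScale ht.ne']
  · intro a b hab
    simp only [f, Prod.mk.injEq, Subtype.mk.injEq] at hab
    obtain ⟨k, hk⟩ := exists_zpow_of_negTwoPhase_eq a.2.2 b.2.2 hab.2
    rw [← quot_mk_diagScale_zpow a k]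
    exact congrArg _ (Subtype.ext (eq_diagScale_of_ballCoord_eq a.2.2 (hpow k) hab.1 hk).symm)
  · intro x
    obtain ⟨k, hk⟩ := exists_zpow_mul_mem_Icc x.2.2
    refine ⟨g (⟨ballCoord x, mem_closedBall_zero_iff.2 x.2.1⟩, ⟨_, hk⟩), ⟨_, rfl⟩, ?_⟩
    rw [← quot_mk_diagScale_zpow x k]
    exact congrArg _ (Subtype.ext (eq_diagScale_of_ballCoord_eq (by simp) (by linarith [hk.1])
      (by simp [ballCoord_diagScale (hpow k)]) (by simp)).symm)

theorem stmt_13_general (n : ℕ) [NeZero n]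
    (bm : EuclideanSpace ℝ (Fin n) → EuclideanSpace ℝ (Fin n))
    (hbm : bm = fun (x : EuclideanSpace ℝ (Fin n)) => WithLp.toLp 2 (fun i : Fin n =>
      if i = 0 then -2 * x 0 else if (i : ℕ) = n - 1 then -(x i) / 2 else x i / 2))
    (U Nu : Set (EuclideanSpace ℝ (Fin n)))
    (hU : U = {x | (x 0) ^ 2 *
      (∑ i ∈ Finset.univ.filter (fun i : Fin n => i ≠ 0), (x i) ^ 2) ≤ 1})
    (hNu : Nu = U \ {x | x 0 = 0}) :
    Nonempty (Quot (fun a b : ↥Nu => bm ↑a = ↑b) ≃ₜ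
      (↥(Metric.closedBall (0 : EuclideanSpace ℝ (Fin (n - 1))) 1) × Circle)) := by
  obtain ⟨m, rfl⟩ : ∃ m, n = m + 1 := ⟨n - 1, (Nat.succ_pred_eq_of_ne_zero (NeZero.ne n)).symm⟩
  have hb : bm = diagScale (-2) := by
    subst hbm
    funext x
    ext j
    induction j using Fin.cases with
    | zero => simp
    | succ i =>
      rw [diagScale_apply_succ]
      simp only [Fin.succ_ne_zero, ↓reduceIte, Fin.val_succ, add_tsub_cancel_right, inv_neg,
        abs_neg, Nat.abs_ofNat]
      split_ifs <;> ring
  have hN : Nu = nuSet m := by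
    ext x
    simp [hNu, hU, nuSet, ← norm_ballCoord_sq, sq_le_one_iff₀ (norm_nonneg _)]
  subst hb hN
  exact nonempty_quot_diagScale_homeomorph m

/-- Let `n ≥ 4` and define `b₋ : ℝⁿ → ℝⁿ` by
`b₋(x₁, x₂, …, x_{n-1}, x_n) = (−2x₁, x₂/2, …, x_{n-1}/2, −x_n/2)`. Let
`𝕌 = {x ∈ ℝⁿ : x₁²(x₂² + ⋯ + x_n²) ≤ 1}` and `ℕᵘ = 𝕌 ∖ {x : x₁ = 0}`; the set `ℕᵘ` is
invariant under `b₋`, and `ℤ` acts on `ℕᵘ` by `k · x = b₋^k(x)`. Then the quotient space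
`ℕᵘ/ℤ` is homeomorphic to `B^{n-1} × S¹`. -/
theorem stmt_13 (n : ℕ) (hn : 4 ≤ n) [NeZero n]
    (bm : EuclideanSpace ℝ (Fin n) → EuclideanSpace ℝ (Fin n))
    (hbm : bm = fun (x : EuclideanSpace ℝ (Fin n)) => WithLp.toLp 2 (fun i : Fin n =>
      if i = 0 then -2 * x 0 else if (i : ℕ) = n - 1 then -(x i) / 2 else x i / 2))
    (U Nu : Set (EuclideanSpace ℝ (Fin n)))
    (hU : U = {x | (x 0) ^ 2 *
      (∑ i ∈ Finset.univ.filter (fun i : Fin n => i ≠ 0), (x i) ^ 2) ≤ 1})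
    (hNu : Nu = U \ {x | x 0 = 0}) :
    Nonempty (Quot (fun a b : ↥Nu => bm ↑a = ↑b) ≃ₜ
      (↥(Metric.closedBall (0 : EuclideanSpace ℝ (Fin (n - 1))) 1) × Circle)) :=
  stmt_13_general n bm hbm U Nu hU hNu
end
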